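/- Let β be a closed 2-form with constant coefficients on ℝ^{2n}, i.e. β = Φ*ω₀ − ω₀ for a linear map Φ. Then the 1-form σ(x) = (1/2)·ι_X β (X the radial field) satisfies dσ = β and ‖σ(x)‖₂ ≤ (1/√2)·‖x‖·‖β‖₂ for all x. -/

import Mathlib

/-- The standard symplectic form `ω₀` on `ℝ^{2n}`, coordinates indexed by `Fin n × Fin 2`
(`(j,0)` is `x_j`, `(j,1)` is `y_j`). -/
def omega0 (n : ℕ) (u v : Fin n × Fin 2 → ℝ) : ℝ :=
  ∑ j : Fin n, (u (j, 0) * v (j, 1) - u (j, 1) * v (j, 0))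

/-- The Euclidean norm of a 2-covector on `ℝ^{2n}`. -/
noncomputable def eucNorm2 (n : ℕ)
    (ω : (Fin n × Fin 2 → ℝ) → (Fin n × Fin 2 → ℝ) → ℝ) : ℝ :=
  Real.sqrt ((1 / 2) * ∑ i : Fin n × Fin 2, ∑ j : Fin n × Fin 2,
    (ω (Pi.single i 1) (Pi.single j 1)) ^ 2)

/-!
Since `β` has constant coefficients, `σ(x) = ½ β(x, ·)` is linear in `x`, so its derivative is
`σ` itself and antisymmetry of `β` gives `dσ(u, v) = ½ β(u, v) - ½ β(v, u) = β(u, v)`. For the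
bound, `σ(x)_i = ½ Σ_j x_j β(e_j, e_i)` and Cauchy–Schwarz in each component gives
`‖σ(x)‖² ≤ ¼ ‖x‖² Σ_{i,j} β(e_i, e_j)² = ½ ‖x‖² ‖β‖₂²`; the `½` in the last step is the
convention `‖β‖₂² = ½ Σ_{i,j} β(e_i, e_j)²` (each pair `i < j` is counted once).
-/

open Finset

namespace LinearMap

variable {ι : Type*} [Fintype ι] [DecidableEq ι]

theorem apply_eq_sum_mul_apply_single (L : (ι → ℝ) →ₗ[ℝ] ℝ) (x : ι → ℝ) :
    L x = ∑ j, x j * L (Pi.single j 1) := by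
  conv_lhs => rw [← univ_sum_single x]
  simp only [map_sum]
  refine sum_congr rfl fun j _ => ?_
  rw [← smul_eq_mul, ← map_smul, ← Pi.single_smul, smul_eq_mul, mul_one]

theorem sq_apply_le_sum_sq_mul_sum_sq (L : (ι → ℝ) →ₗ[ℝ] ℝ) (x : ι → ℝ) :
    L x ^ 2 ≤ (∑ j, x j ^ 2) * ∑ j, L (Pi.single j 1) ^ 2 := by
  rw [apply_eq_sum_mul_apply_single]
  exact sum_mul_sq_le_sq_mul_sq _ _ _

theorem sum_sq_apply_single_le (B : (ι → ℝ) →ₗ[ℝ] (ι → ℝ) →ₗ[ℝ] ℝ) (x : ι → ℝ) :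
    ∑ i, B x (Pi.single i 1) ^ 2 ≤
      (∑ j, x j ^ 2) * ∑ i, ∑ j, B (Pi.single i 1) (Pi.single j 1) ^ 2 := by
  calc ∑ i, B x (Pi.single i 1) ^ 2
      ≤ ∑ i, (∑ j, x j ^ 2) * ∑ j, B (Pi.single j 1) (Pi.single i 1) ^ 2 :=
        sum_le_sum fun i _ => sq_apply_le_sum_sq_mul_sum_sq (B.flip (Pi.single i 1)) x
    _ = (∑ j, x j ^ 2) * ∑ i, ∑ j, B (Pi.single i 1) (Pi.single j 1) ^ 2 := by
        rw [← mul_sum, sum_comm]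

end LinearMap

theorem LinearMap.fderiv_apply_left {E F : Type*} [NormedAddCommGroup E] [NormedSpace ℝ E]
    [FiniteDimensional ℝ E] [AddCommGroup F] [Module ℝ F]
    (B : E →ₗ[ℝ] F →ₗ[ℝ] ℝ) (v : F) (x u : E) :
    fderiv ℝ (fun y => B y v) x u = B u v := by
  rw [show (fun y => B y v) = (B.flip v).toContinuousLinearMap from rfl,
    ContinuousLinearMap.fderiv]
  rfl

theorem LinearMap.IsAlt.fderiv_half_apply_left_sub {E : Type*} [NormedAddCommGroup E]
    [NormedSpace ℝ E] [FiniteDimensional ℝ E] {B : E →ₗ[ℝ] E →ₗ[ℝ] ℝ} (hB : B.IsAlt)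
    (x u v : E) :
    fderiv ℝ (fun y => 1 / 2 * B y v) x u - fderiv ℝ (fun y => 1 / 2 * B y u) x v = B u v := by
  have hd (w : E) : DifferentiableAt ℝ (fun y => B y w) x :=
    (B.flip w).toContinuousLinearMap.differentiableAt
  rw [fderiv_const_mul (hd v), fderiv_const_mul (hd u)]
  simp only [FunLike.coe_smul, Pi.smul_apply, B.fderiv_apply_left, smul_eq_mul,
    ← hB.neg v u]
  ring

def omega0Form (n : ℕ) : LinearMap.BilinForm ℝ (Fin n × Fin 2 → ℝ) :=
  LinearMap.mk₂ ℝ (omega0 n)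
    (fun _ _ _ => by
      simp only [omega0, Pi.add_apply, ← sum_add_distrib]; exact sum_congr rfl fun _ _ => by ring)
    (fun _ _ _ => by
      simp only [omega0, Pi.smul_apply, smul_eq_mul, mul_sum]; exact sum_congr rfl fun _ _ => by ring)
    (fun _ _ _ => by
      simp only [omega0, Pi.add_apply, ← sum_add_distrib]; exact sum_congr rfl fun _ _ => by ring)
    (fun _ _ _ => by
      simp only [omega0, Pi.smul_apply, smul_eq_mul, mul_sum]; exact sum_congr rfl fun _ _ => by ring)

theorem omega0Form_isAlt (n : ℕ) : (omega0Form n).IsAlt := fun u => by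
  simp [omega0Form, omega0, mul_comm]

theorem eucNorm2_eq (n : ℕ) (ω : (Fin n × Fin 2 → ℝ) → (Fin n × Fin 2 → ℝ) → ℝ) :
    eucNorm2 n ω = √(∑ i, ∑ j, ω (Pi.single i 1) (Pi.single j 1) ^ 2) / √2 := by
  rw [eucNorm2, one_div_mul_eq_div, Real.sqrt_div' _ zero_le_two]

/-- For the constant-coefficient closed 2-form `β = Φ*ω₀ − ω₀` of a linear map `Φ`,
the 1-form `σ(x) = (1/2) ι_X β` (with `X` the radial field) satisfies `dσ = β` and
`‖σ(x)‖₂ ≤ (1/√2) ‖x‖ ‖β‖₂`. -/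
theorem half_radial_contraction_primitive (n : ℕ)
    (Φ : (Fin n × Fin 2 → ℝ) →ₗ[ℝ] (Fin n × Fin 2 → ℝ))
    (β : (Fin n × Fin 2 → ℝ) → (Fin n × Fin 2 → ℝ) → ℝ)
    (hβ : ∀ u v, β u v = omega0 n (Φ u) (Φ v) - omega0 n u v)
    (σ : (Fin n × Fin 2 → ℝ) → (Fin n × Fin 2 → ℝ) → ℝ)
    (hσ : ∀ x v, σ x v = (1 / 2) * β x v) :
    (∀ x u v, fderiv ℝ (fun y => σ y v) x u - fderiv ℝ (fun y => σ y u) x v = β u v) ∧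
    (∀ x : Fin n × Fin 2 → ℝ,
      Real.sqrt (∑ i, (σ x (Pi.single i 1)) ^ 2) ≤
        (1 / Real.sqrt 2) * Real.sqrt (∑ i, x i ^ 2) * eucNorm2 n β) := by
  set B := (omega0Form n).compl₁₂ Φ Φ - omega0Form n
  have hB : B.IsAlt := fun u => by simp [B, omega0Form_isAlt n u, omega0Form_isAlt n (Φ u)]
  obtain rfl : β = fun u v => B u v := by ext u v; simp [B, hβ, omega0Form]
  obtain rfl : σ = fun x v => 1 / 2 * B x v := by ext x v; exact hσ x v
  refine ⟨hB.fderiv_half_apply_left_sub, fun x => ?_⟩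
  calc √(∑ i, (1 / 2 * B x (Pi.single i 1)) ^ 2)
      = 1 / 2 * √(∑ i, B x (Pi.single i 1) ^ 2) := by
        simp_rw [mul_pow, ← mul_sum]
        rw [Real.sqrt_mul (by positivity), Real.sqrt_sq (by positivity)]
    _ ≤ 1 / 2 * √((∑ j, x j ^ 2) * ∑ i, ∑ j, B (Pi.single i 1) (Pi.single j 1) ^ 2) := by
        gcongr
        exact B.sum_sq_apply_single_le x
    _ = (1 / √2) * √(∑ i, x i ^ 2) * eucNorm2 n (fun u v => B u v) := by
        rw [eucNorm2_eq, Real.sqrt_mul (by positivity)]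
        field_simp
        rw [Real.sq_sqrt zero_le_two]
        ring
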